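/- (Normal fan decomposition of the polar dual) With the assumptions above, for each vertex v of P define σ_v = {u : u·v ≤ u·y for all y ∈ P}. Then σ_v ∩ P° is the convex hull of 0 and the points u_F/z_F for facets F containing v, and P° is the union over vertices v of these pieces, with pairwise disjoint interiors. -/

import Mathlib

open Matrix Filter Topology

/-!
`u ∈ σ_v` says that `v` minimises `u · _` over `P`. Each `u_F / z_F` with `F ∋ v` is `≥ -1`
on `P` with value `-1` at `v`, which gives `⊇`. Conversely, if `u ∈ σ_v ∩ P°` is strictly
separated from the hull by `w · _ < s`, then `e = -(s v + w)` has `u_F · e ≥ 0` for the facets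
through `v`, so `v + t e ∈ P` for small `t > 0`; this forces `u · w ≤ -s (u · v) ≤ s`, a
contradiction. Covering: the minimum of `u` over the compact set `P` is attained on an exposed
face, which has an extreme point. Disjointness: moving an interior point of `σ_v` slightly in
the direction `v - w` keeps it in `σ_v`, which is incompatible with it also lying in `σ_w`.
-/

section Ray

variable {E : Type*} [TopologicalSpace E] [AddCommGroup E] [Module ℝ E] [ContinuousAdd E]
  [ContinuousSMul ℝ E]

lemma exists_pos_add_smul_mem_of_mem_nhds {s : Set E} {p : E} (hs : s ∈ 𝓝 p) (c : E) :
    ∃ t : ℝ, 0 < t ∧ p + t • c ∈ s := by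
  have hlim : Tendsto (fun t : ℝ => p + t • c) (𝓝[>] (0 : ℝ)) (𝓝 p) := by
    have hcont : Continuous fun t : ℝ => p + t • c := by fun_prop
    simpa using (hcont.tendsto 0).mono_left nhdsWithin_le_nhds
  obtain ⟨t, htp, hts⟩ := ((hlim.eventually hs).and self_mem_nhdsWithin).exists
  exact ⟨t, hts, htp⟩

end Ray

variable {ι m : Type*} [Fintype ι]

def polyhedron (U : m → ι → ℝ) (z : m → ℝ) : Set (ι → ℝ) :=
  {y | ∀ i, 0 ≤ U i ⬝ᵥ y + z i}

def normalCone (P : Set (ι → ℝ)) (v : ι → ℝ) : Set (ι → ℝ) :=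
  {u | ∀ y ∈ P, u ⬝ᵥ v ≤ u ⬝ᵥ y}

def polarDual (P : Set (ι → ℝ)) : Set (ι → ℝ) :=
  {u | ∀ y ∈ P, -1 ≤ u ⬝ᵥ y}

def scaledActiveNormals (U : m → ι → ℝ) (z : m → ℝ) (v : ι → ℝ) : Set (ι → ℝ) :=
  (fun i => (z i)⁻¹ • U i) '' {i | U i ⬝ᵥ v + z i = 0}

lemma isClosed_polyhedron (U : m → ι → ℝ) (z : m → ℝ) : IsClosed (polyhedron U z) := by
  simp only [polyhedron, Set.ofPred_forall]
  exact isClosed_iInter fun i => isClosed_le continuous_const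
    ((continuous_const.dotProduct continuous_id).add continuous_const)

lemma zero_mem_normalCone (P : Set (ι → ℝ)) (v : ι → ℝ) : 0 ∈ normalCone P v :=
  fun _ _ => by simp

lemma zero_mem_polarDual (P : Set (ι → ℝ)) : 0 ∈ polarDual P :=
  fun _ _ => by simp

lemma convex_normalCone (P : Set (ι → ℝ)) (v : ι → ℝ) : Convex ℝ (normalCone P v) := by
  intro u₁ h₁ u₂ h₂ a b ha hb _ y hy
  simp only [add_dotProduct, smul_dotProduct, smul_eq_mul]
  exact add_le_add (mul_le_mul_of_nonneg_left (h₁ y hy) ha)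
    (mul_le_mul_of_nonneg_left (h₂ y hy) hb)

lemma convex_polarDual (P : Set (ι → ℝ)) : Convex ℝ (polarDual P) := by
  intro u₁ h₁ u₂ h₂ a b ha hb hab y hy
  simp only [add_dotProduct, smul_dotProduct, smul_eq_mul]
  linarith [mul_le_mul_of_nonneg_left (h₁ y hy) ha, mul_le_mul_of_nonneg_left (h₂ y hy) hb]

lemma pos_or_eq_zero_of_zero_mem_interior {U : m → ι → ℝ} {z : m → ℝ}
    (h0 : 0 ∈ interior (polyhedron U z)) (i : m) : 0 < z i ∨ U i = 0 := by
  refine or_iff_not_imp_right.2 fun hU => ?_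
  obtain ⟨t, ht, htP⟩ := exists_pos_add_smul_mem_of_mem_nhds (mem_interior_iff_mem_nhds.1 h0) (-U i)
  have hUU : 0 < U i ⬝ᵥ U i := by simpa using dotProduct_star_self_pos_iff.2 hU
  have hi := htP i
  simp only [zero_add, dotProduct_smul, dotProduct_neg, smul_eq_mul] at hi
  nlinarith

lemma exists_pos_add_smul_mem_polyhedron [Finite m] {U : m → ι → ℝ} {z : m → ℝ} {v e : ι → ℝ}
    (hv : v ∈ polyhedron U z) (he : ∀ i, U i ⬝ᵥ v + z i = 0 → 0 ≤ U i ⬝ᵥ e) :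
    ∃ t : ℝ, 0 < t ∧ v + t • e ∈ polyhedron U z := by
  have hinactive : ∀ᶠ y in 𝓝 v, ∀ i, U i ⬝ᵥ v + z i ≠ 0 → 0 < U i ⬝ᵥ y + z i := by
    refine eventually_all.2 fun i => ?_
    by_cases hi : U i ⬝ᵥ v + z i = 0
    · exact .of_forall fun _ h => (h hi).elim
    · have hcont : Continuous fun y => U i ⬝ᵥ y + z i :=
        (continuous_const.dotProduct continuous_id).add continuous_const
      exact ((hcont.tendsto v).eventually_const_lt (lt_of_le_of_ne (hv i) (Ne.symm hi))).mono
        fun _ hy _ => hy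
  obtain ⟨t, ht, hte⟩ := exists_pos_add_smul_mem_of_mem_nhds hinactive e
  refine ⟨t, ht, fun i => ?_⟩
  by_cases hi : U i ⬝ᵥ v + z i = 0
  · rw [dotProduct_add, dotProduct_smul, smul_eq_mul]
    nlinarith [he i hi]
  · exact (hte i hi).le

lemma insert_zero_scaledActiveNormals_subset {U : m → ι → ℝ} {z : m → ℝ}
    (hz : ∀ i, 0 < z i ∨ U i = 0) (v : ι → ℝ) :
    insert 0 (scaledActiveNormals U z v) ⊆
      normalCone (polyhedron U z) v ∩ polarDual (polyhedron U z) := by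
  rintro _ (rfl | ⟨i, hi, rfl⟩)
  · exact ⟨zero_mem_normalCone _ _, zero_mem_polarDual _⟩
  rcases hz i with hzi | hUi
  · have hle : ∀ y ∈ polyhedron U z, -1 ≤ ((z i)⁻¹ • U i) ⬝ᵥ y := fun y hy => by
      rw [smul_dotProduct, smul_eq_mul, le_inv_mul_iff₀ hzi]
      linarith [hy i]
    have hv : ((z i)⁻¹ • U i) ⬝ᵥ v = -1 := by
      rw [smul_dotProduct, smul_eq_mul, eq_neg_of_add_eq_zero_left hi, mul_neg,
        inv_mul_cancel₀ hzi.ne']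
    exact ⟨fun y hy => hv ▸ hle y hy, hle⟩
  · simpa [hUi] using And.intro (zero_mem_normalCone (polyhedron U z) v)
      (zero_mem_polarDual (polyhedron U z))

lemma normalCone_inter_polarDual_subset_convexHull [Finite m] {U : m → ι → ℝ} {z : m → ℝ}
    {v : ι → ℝ} (hz : ∀ i, 0 < z i ∨ U i = 0) (hv : v ∈ polyhedron U z) :
    normalCone (polyhedron U z) v ∩ polarDual (polyhedron U z) ⊆
      convexHull ℝ (insert 0 (scaledActiveNormals U z v)) := by
  classical
  rintro u ⟨huσ, huQ⟩
  by_contra hu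
  have hclosed : IsClosed (convexHull ℝ (insert 0 (scaledActiveNormals U z v))) :=
    (((Set.toFinite _).image _).insert 0).isCompact_convexHull ℝ |>.isClosed
  obtain ⟨f, s, hfC, hfu⟩ := geometric_hahn_banach_closed_point (convex_convexHull ℝ _) hclosed hu
  obtain ⟨w, hw⟩ : ∃ w : ι → ℝ, ∀ y, f y = w ⬝ᵥ y :=
    ⟨(dotProductEquiv ℝ ι).symm f.toLinearMap, fun y =>
      (LinearMap.congr_fun ((dotProductEquiv ℝ ι).apply_symm_apply f.toLinearMap) y).symm⟩
  have hs : 0 < s := by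
    simpa [hw] using hfC 0 (subset_convexHull ℝ _ (Set.mem_insert _ _))
  have he : ∀ i, U i ⬝ᵥ v + z i = 0 → 0 ≤ U i ⬝ᵥ -(s • v + w) := by
    intro i hi
    have hUw : U i ⬝ᵥ w ≤ s * z i := by
      rcases hz i with hzi | hUi
      · have := hfC _ (subset_convexHull ℝ _ (Set.mem_insert_of_mem _ ⟨i, hi, rfl⟩))
        rw [hw, dotProduct_smul, smul_eq_mul, inv_mul_lt_iff₀ hzi, dotProduct_comm] at this
        linarith
      · have hzi : z i = 0 := by simpa [hUi] using hi
        simp [hUi, hzi]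
    rw [dotProduct_neg, dotProduct_add, dotProduct_smul, smul_eq_mul, eq_neg_of_add_eq_zero_left hi]
    linarith
  obtain ⟨t, ht, htP⟩ := exists_pos_add_smul_mem_polyhedron hv he
  have hmin := huσ _ htP
  have hv1 := huQ v hv
  rw [hw, dotProduct_comm] at hfu
  simp only [dotProduct_add, dotProduct_smul, dotProduct_neg, smul_eq_mul] at hmin
  have hue : 0 ≤ -(s * u ⬝ᵥ v + u ⬝ᵥ w) := (mul_nonneg_iff_of_pos_left ht).1 (by linarith)
  linarith [mul_le_mul_of_nonneg_left hv1 hs.le]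

theorem normalCone_inter_polarDual_eq_convexHull [Finite m] {U : m → ι → ℝ} {z : m → ℝ}
    {v : ι → ℝ} (hz : ∀ i, 0 < z i ∨ U i = 0) (hv : v ∈ polyhedron U z) :
    normalCone (polyhedron U z) v ∩ polarDual (polyhedron U z) =
      convexHull ℝ (insert 0 (scaledActiveNormals U z v)) :=
  (normalCone_inter_polarDual_subset_convexHull hz hv).antisymm <|
    convexHull_min (insert_zero_scaledActiveNormals_subset hz v)
      ((convex_normalCone _ _).inter (convex_polarDual _))

lemma exists_mem_extremePoints_mem_normalCone {P : Set (ι → ℝ)} (hP : IsCompact P)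
    (hne : P.Nonempty) (u : ι → ℝ) : ∃ v ∈ P.extremePoints ℝ, u ∈ normalCone P v := by
  let l : StrongDual ℝ (ι → ℝ) := LinearMap.toContinuousLinearMap (dotProductBilin ℝ ℝ (-u))
  have hexp : IsExposed ℝ P {x ∈ P | ∀ y ∈ P, l y ≤ l x} := fun _ => ⟨l, rfl⟩
  obtain ⟨x, hxP, hx⟩ := hP.exists_isMaxOn hne l.continuous.continuousOn
  obtain ⟨v, hv⟩ := (hexp.isCompact hP).extremePoints_nonempty ⟨x, hxP, hx⟩
  refine ⟨v, hexp.isExtreme.extremePoints_subset_extremePoints hv, fun y hy => ?_⟩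
  simpa [l] using hv.1.2 y hy

lemma disjoint_interior_normalCone {P : Set (ι → ℝ)} {v w : ι → ℝ} (hv : v ∈ P) (hw : w ∈ P)
    (hvw : v ≠ w) : Disjoint (interior (normalCone P v)) (normalCone P w) := by
  refine Set.disjoint_left.2 fun p hp hpw => ?_
  obtain ⟨t, ht, htv⟩ :=
    exists_pos_add_smul_mem_of_mem_nhds (mem_interior_iff_mem_nhds.1 hp) (v - w)
  have hpos : 0 < (v - w) ⬝ᵥ (v - w) := by
    simpa using dotProduct_star_self_pos_iff.2 (sub_ne_zero.2 hvw)
  have hvw' := htv w hw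
  have hwv := hpw v hv
  rw [dotProduct_sub] at hpos
  simp only [add_dotProduct, smul_dotProduct, smul_eq_mul] at hvw'
  nlinarith

theorem stmt_11_general (d n : ℕ)
    (U : Fin n → Fin d → ℝ) (z : Fin n → ℝ)
    (P : Set (Fin d → ℝ))
    (hP : P = {y : Fin d → ℝ | ∀ i : Fin n, 0 ≤ U i ⬝ᵥ y + z i})
    (hbdd : Bornology.IsBounded P)
    (h0 : (0 : Fin d → ℝ) ∈ interior P)
    (V : Finset (Fin d → ℝ)) (hV : (V : Set (Fin d → ℝ)) = Set.extremePoints ℝ P)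
    (S : (Fin d → ℝ) → Finset (Fin n))
    (hS : ∀ v : Fin d → ℝ, S v = Finset.univ.filter fun i => U i ⬝ᵥ v + z i = 0)
    -- the polar dual
    (Q : Set (Fin d → ℝ)) (hQ : Q = {u : Fin d → ℝ | ∀ y ∈ P, -1 ≤ u ⬝ᵥ y})
    -- the normal cones
    (σ : (Fin d → ℝ) → Set (Fin d → ℝ))
    (hσ : ∀ v : Fin d → ℝ, σ v = {u : Fin d → ℝ | ∀ y ∈ P, u ⬝ᵥ v ≤ u ⬝ᵥ y}) :
    (∀ v ∈ V, σ v ∩ Q =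
        convexHull ℝ ({0} ∪ {x : Fin d → ℝ | ∃ i ∈ S v, x = (z i)⁻¹ • U i})) ∧
    (Q = ⋃ v ∈ V, σ v ∩ Q) ∧
    (∀ v ∈ V, ∀ w ∈ V, v ≠ w →
        interior (σ v ∩ Q) ∩ interior (σ w ∩ Q) = ∅) := by
  obtain rfl : P = polyhedron U z := hP
  obtain rfl : Q = polarDual (polyhedron U z) := hQ
  obtain rfl : σ = normalCone (polyhedron U z) := funext hσ
  have hz := pos_or_eq_zero_of_zero_mem_interior h0
  have hVP : ∀ v ∈ V, v ∈ polyhedron U z := fun v hv =>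
    extremePoints_subset (hV ▸ Finset.mem_coe.2 hv)
  refine ⟨fun v hv => ?_, ?_, fun v hv w hw hvw => ?_⟩
  · rw [normalCone_inter_polarDual_eq_convexHull hz (hVP v hv), Set.singleton_union]
    congr! 2
    ext x
    simp [scaledActiveNormals, hS, eq_comm]
  · refine (Set.iUnion₂_subset fun _ _ => Set.inter_subset_right).antisymm' fun u hu => ?_
    have hcompact := Metric.isCompact_of_isClosed_isBounded (isClosed_polyhedron U z) hbdd
    obtain ⟨v, hv, huv⟩ :=
      exists_mem_extremePoints_mem_normalCone hcompact ⟨0, interior_subset h0⟩ u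
    exact Set.mem_biUnion (by rwa [hV]) ⟨huv, hu⟩
  · exact Set.disjoint_iff_inter_eq_empty.1 <|
      (disjoint_interior_normalCone (hVP v hv) (hVP w hw) hvw).mono
        (interior_mono Set.inter_subset_left) (interior_subset.trans Set.inter_subset_left)

/-- Normal fan decomposition of the polar dual: for a bounded full-dimensional
polytope P = {y : U·y + z ≥ 0} with minimal facet representation and 0 ∈ int(P),
for each vertex v the piece σ_v ∩ P° is the convex hull of 0 and the points
u_F / z_F over facets F containing v; these pieces cover P° and have pairwise
disjoint interiors. -/
theorem stmt_11 (d n : ℕ) (hd : 0 < d)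
    (U : Fin n → Fin d → ℝ) (z : Fin n → ℝ)
    (P : Set (Fin d → ℝ))
    (hP : P = {y : Fin d → ℝ | ∀ i : Fin n, 0 ≤ U i ⬝ᵥ y + z i})
    (hbdd : Bornology.IsBounded P)
    (h0 : (0 : Fin d → ℝ) ∈ interior P)
    (hmin : ∀ i : Fin n, ∃ y ∈ P, U i ⬝ᵥ y + z i = 0 ∧ ∀ j : Fin n, j ≠ i → 0 < U j ⬝ᵥ y + z j)
    (V : Finset (Fin d → ℝ)) (hV : (V : Set (Fin d → ℝ)) = Set.extremePoints ℝ P)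
    (S : (Fin d → ℝ) → Finset (Fin n))
    (hS : ∀ v : Fin d → ℝ, S v = Finset.univ.filter fun i => U i ⬝ᵥ v + z i = 0)
    -- the polar dual
    (Q : Set (Fin d → ℝ)) (hQ : Q = {u : Fin d → ℝ | ∀ y ∈ P, -1 ≤ u ⬝ᵥ y})
    -- the normal cones
    (σ : (Fin d → ℝ) → Set (Fin d → ℝ))
    (hσ : ∀ v : Fin d → ℝ, σ v = {u : Fin d → ℝ | ∀ y ∈ P, u ⬝ᵥ v ≤ u ⬝ᵥ y}) :
    (∀ v ∈ V, σ v ∩ Q =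
        convexHull ℝ ({0} ∪ {x : Fin d → ℝ | ∃ i ∈ S v, x = (z i)⁻¹ • U i})) ∧
    (Q = ⋃ v ∈ V, σ v ∩ Q) ∧
    (∀ v ∈ V, ∀ w ∈ V, v ≠ w →
        interior (σ v ∩ Q) ∩ interior (σ w ∩ Q) = ∅) :=
  stmt_11_general d n U z P hP hbdd h0 V hV S hS Q hQ σ hσ
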